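/- Define W₂(N,k) = ∑ θ^{inv(π)} over all k-winnable π ∈ S_N, i.e., those π for which the strategy 'reject the first k candidates and accept the next left-to-right second maximum' selects the position holding value N−1. Then W₂ satisfies W₂(N,k) = θ²·P_{N-2}·W₂(N-1,k) + θ·T₂(N-1,k), with initial condition W₂(k+1,k) = θ·(P_k)!. -/

import Mathlib

open Finset
open scoped Classical

/-- Number of inversions of a permutation of `Fin N`. -/
def invCount {N : ℕ} (π : Equiv.Perm (Fin N)) : ℕ :=
  (Finset.univ.filter (fun p : Fin N × Fin N => p.1 < p.2 ∧ π p.2 < π p.1)).card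

/-- `P_j(θ) = 1 + θ + ⋯ + θ^{j-1}`. -/
def Ppoly (θ : ℝ) (j : ℕ) : ℝ := ∑ i ∈ Finset.range j, θ ^ i

/-- `(P_m)! = P_m ⋯ P_1`. -/
def Pfact (θ : ℝ) (m : ℕ) : ℝ := ∏ j ∈ Finset.Icc 1 m, Ppoly θ j

/-- Position `i` of `π` is a left-to-right second maximum. -/
def isSecondMax {N : ℕ} (π : Equiv.Perm (Fin N)) (i : Fin N) : Prop :=
  (Finset.univ.filter (fun l : Fin N => l ≤ i ∧ π i < π l)).card = 1

/-- `π` is non-`k`-pickable for the second-maximum strategy. -/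
def nonPickable2 {N : ℕ} (k : ℕ) (π : Equiv.Perm (Fin N)) : Prop :=
  ∀ i : Fin N, k ≤ (i : ℕ) → ¬ isSecondMax π i

/-- `π ∈ S_N` is `k`-winnable: the first left-to-right second maximum at a (0-based)
position `≥ k` carries the second-largest value `N-1` (0-based value `N-2`). -/
def kWinnable2 {N : ℕ} (k : ℕ) (π : Equiv.Perm (Fin N)) : Prop :=
  ∃ i : Fin N, k ≤ (i : ℕ) ∧ isSecondMax π i ∧
    (∀ j : Fin N, k ≤ (j : ℕ) → isSecondMax π j → i ≤ j) ∧ ((π i : Fin N) : ℕ) = N - 2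

/-- `T₂(N,k) = ∑ θ^{inv π}` over non-`k`-pickable `π ∈ S_N`. -/
noncomputable def T2 (θ : ℝ) (N k : ℕ) : ℝ :=
  ∑ π ∈ Finset.univ.filter (fun π : Equiv.Perm (Fin N) => nonPickable2 k π), θ ^ invCount π

/-- `W₂(N,k) = ∑ θ^{inv π}` over `k`-winnable `π ∈ S_N`. -/
noncomputable def W2 (θ : ℝ) (N k : ℕ) : ℝ :=
  ∑ π ∈ Finset.univ.filter (fun π : Equiv.Perm (Fin N) => kWinnable2 k π), θ ^ invCount π

/-!
Every `π ∈ S_{n+1}` is uniquely `permSnoc σ e`: its last value `e` together with the pattern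
`σ ∈ S_n` of its first `n` values (values are 0-based). Then `inv π = inv σ + (n - e)`, the
earlier positions of `π` are second maxima exactly when the corresponding positions of `σ` are,
and the last position is one iff `e = n - 1`. Hence `π` is `k`-winnable iff `σ` is (when
`e < n - 1`), iff `σ` is non-`k`-pickable (when `e = n - 1`), and never when `e = n`, since then
the value `n - 1` of `π` is the maximum of `σ`. Summing `θ ^ inv` over `e` gives the recurrence;
the initial value follows from `W₂(k,k) = 0` and `T₂(k,k) = ∑ θ ^ inv = (P_k)!`.
-/

section

variable {n : ℕ}

lemma Fin.card_filter_univ_castSucc (p : Fin (n + 1) → Prop) [DecidablePred p] :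
    #{x | p x} = #{x : Fin n | p x.castSucc} + if p (Fin.last n) then 1 else 0 := by
  simp only [card_filter, Fin.sum_univ_castSucc]

lemma card_filter_comp_perm {α : Type*} [Fintype α] (σ : Equiv.Perm α) (p : α → Prop)
    [DecidablePred p] :
    #{x | p (σ x)} = #{x | p x} := by
  simp only [card_filter]
  exact Equiv.sum_comp σ (fun x => if p x then 1 else 0)

lemma Fin.card_filter_le_castSucc (e : Fin (n + 1)) : #{v : Fin n | e ≤ v.castSucc} = n - e := by
  have h := card_filter_add_card_filter_not (s := univ) fun v : Fin n => (v : ℕ) < e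
  simp only [Fin.card_filter_val_lt, card_univ, Fintype.card_fin, not_lt] at h
  have hcast : #{v : Fin n | e ≤ v.castSucc} = #{v : Fin n | (e : ℕ) ≤ v} := by
    simp only [Fin.le_def, Fin.val_castSucc]
  have := e.isLt
  omega

lemma Fin.val_succAbove (e : Fin (n + 1)) (v : Fin n) :
    (e.succAbove v : ℕ) = if (v : ℕ) < e then (v : ℕ) else v + 1 := by
  rcases lt_or_ge v.castSucc e with h | h
  · simp [Fin.succAbove_of_castSucc_lt _ _ h, show (v : ℕ) < e from h]
  · simp [Fin.succAbove_of_le_castSucc _ _ h, show ¬ (v : ℕ) < e from not_lt.2 h]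

/-- The permutation of `Fin (n + 1)` taking the value `e` at the last position, its first
`n` values being in the relative order of `σ`. -/
def permSnoc (σ : Equiv.Perm (Fin n)) (e : Fin (n + 1)) : Equiv.Perm (Fin (n + 1)) :=
  finSuccEquivLast.trans ((Equiv.optionCongr σ).trans (finSuccEquiv' e).symm)

@[simp] lemma permSnoc_castSucc (σ : Equiv.Perm (Fin n)) (e : Fin (n + 1)) (i : Fin n) :
    permSnoc σ e i.castSucc = e.succAbove (σ i) := by
  simp [permSnoc]

@[simp] lemma permSnoc_last (σ : Equiv.Perm (Fin n)) (e : Fin (n + 1)) :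
    permSnoc σ e (Fin.last n) = e := by
  simp [permSnoc]

lemma permSnoc_bijective :
    Function.Bijective fun p : Equiv.Perm (Fin n) × Fin (n + 1) => permSnoc p.1 p.2 := by
  refine (Fintype.bijective_iff_injective_and_card _).2 ⟨?_, ?_⟩
  · rintro ⟨σ, e⟩ ⟨τ, f⟩ h
    have he : e = f := by simpa using congr($h (Fin.last n))
    subst he
    have hστ : σ = τ := Equiv.ext fun i => Fin.succAbove_right_injective (p := e) <| by
      simpa using congr($h i.castSucc)
    rw [hστ]
  · simp [Fintype.card_perm, Nat.factorial_succ, mul_comm]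

lemma sum_perm_succ {M : Type*} [AddCommMonoid M] (f : Equiv.Perm (Fin (n + 1)) → M) :
    ∑ π, f π = ∑ σ : Equiv.Perm (Fin n), ∑ e, f (permSnoc σ e) := by
  rw [← Fintype.sum_prod_type']
  exact (Fintype.sum_bijective _ permSnoc_bijective _ _ fun _ => rfl).symm

def largerBefore {N : ℕ} (π : Equiv.Perm (Fin N)) (i : Fin N) : ℕ :=
  #{l | l ≤ i ∧ π i < π l}

lemma isSecondMax_iff {N : ℕ} (π : Equiv.Perm (Fin N)) (i : Fin N) :
    isSecondMax π i ↔ largerBefore π i = 1 := Iff.rfl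

lemma invCount_eq_sum_largerBefore {N : ℕ} (π : Equiv.Perm (Fin N)) :
    invCount π = ∑ j, largerBefore π j := by
  simp only [invCount, largerBefore, card_filter, Fintype.sum_prod_type]
  rw [Finset.sum_comm]
  refine sum_congr rfl fun j _ => sum_congr rfl fun i _ => if_congr ?_ rfl rfl
  exact ⟨fun h => ⟨h.1.le, h.2⟩,
    fun h => ⟨h.1.lt_of_ne (by rintro rfl; exact lt_irrefl _ h.2), h.2⟩⟩

@[simp] lemma largerBefore_permSnoc_castSucc (σ : Equiv.Perm (Fin n)) (e : Fin (n + 1))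
    (i : Fin n) : largerBefore (permSnoc σ e) i.castSucc = largerBefore σ i := by
  simp [largerBefore, Fin.card_filter_univ_castSucc, Fin.succAbove_lt_succAbove_iff]

@[simp] lemma largerBefore_permSnoc_last (σ : Equiv.Perm (Fin n)) (e : Fin (n + 1)) :
    largerBefore (permSnoc σ e) (Fin.last n) = n - e := by
  simp only [largerBefore, Fin.card_filter_univ_castSucc, permSnoc_castSucc, permSnoc_last,
    Fin.le_last, lt_self_iff_false, if_false, add_zero, true_and,
    Fin.lt_succAbove_iff_le_castSucc]
  rw [card_filter_comp_perm σ (fun v => e ≤ v.castSucc), Fin.card_filter_le_castSucc]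

lemma invCount_permSnoc (σ : Equiv.Perm (Fin n)) (e : Fin (n + 1)) :
    invCount (permSnoc σ e) = invCount σ + (n - e) := by
  simp [invCount_eq_sum_largerBefore, Fin.sum_univ_castSucc]

lemma Ppoly_eq_sum_fin (θ : ℝ) (m : ℕ) : Ppoly θ m = ∑ e : Fin m, θ ^ (m - 1 - e) := by
  rw [Ppoly, ← sum_range_reflect, Fin.sum_univ_eq_sum_range (fun j => θ ^ (m - 1 - j))]

lemma sum_pow_invCount (θ : ℝ) (m : ℕ) :
    ∑ σ : Equiv.Perm (Fin m), θ ^ invCount σ = Pfact θ m := by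
  induction m with
  | zero => simp [Pfact, invCount]
  | succ m ih =>
    simp only [sum_perm_succ, invCount_permSnoc, pow_add, ← mul_sum, ← sum_mul, ih]
    rw [Pfact, Pfact, prod_Icc_succ_top (by omega), Ppoly_eq_sum_fin, Nat.add_sub_cancel]

@[simp] lemma isSecondMax_permSnoc_castSucc (σ : Equiv.Perm (Fin n)) (e : Fin (n + 1))
    (i : Fin n) : isSecondMax (permSnoc σ e) i.castSucc ↔ isSecondMax σ i := by
  simp [isSecondMax_iff]

@[simp] lemma isSecondMax_permSnoc_last (σ : Equiv.Perm (Fin n)) (e : Fin (n + 1)) :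
    isSecondMax (permSnoc σ e) (Fin.last n) ↔ n - e = 1 := by
  simp [isSecondMax_iff]

lemma not_isSecondMax_of_val_eq {N : ℕ} (π : Equiv.Perm (Fin N)) {i : Fin N}
    (h : (π i : ℕ) = N - 1) : ¬ isSecondMax π i := by
  rw [isSecondMax_iff, largerBefore, filter_false_of_mem fun l _ hl => ?_]
  · simp
  · have := (π l).isLt
    have : (π i : ℕ) < π l := hl.2
    omega

lemma kWinnable2_permSnoc_of_lt (σ : Equiv.Perm (Fin n)) (e : Fin (n + 1)) (k : ℕ)
    (he : (e : ℕ) + 1 < n) :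
    kWinnable2 k (permSnoc σ e) ↔ kWinnable2 k σ := by
  have hval (v : Fin n) : (e.succAbove v : ℕ) = n - 1 ↔ (v : ℕ) = n - 2 := by
    rw [Fin.val_succAbove]; split <;> omega
  have hlast : n - (e : ℕ) ≠ 1 := by omega
  simp [kWinnable2, Fin.exists_fin_succ', Fin.forall_fin_succ', hval, hlast]

lemma kWinnable2_permSnoc_iff_nonPickable2 (σ : Equiv.Perm (Fin n)) (e : Fin (n + 1)) {k : ℕ}
    (hk : k ≤ n) (he : (e : ℕ) + 1 = n) : kWinnable2 k (permSnoc σ e) ↔ nonPickable2 k σ := by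
  have hval (v : Fin n) : (e.succAbove v : ℕ) ≠ n - 1 := by
    rw [Fin.val_succAbove]; split <;> omega
  have he' : (e : ℕ) = n - 1 := by omega
  have hlast : n - (n - 1) = 1 := by omega
  simp [kWinnable2, nonPickable2, Fin.exists_fin_succ', Fin.forall_fin_succ', hval, he', hlast, hk]

lemma not_kWinnable2_permSnoc_last (σ : Equiv.Perm (Fin n)) (k : ℕ) :
    ¬ kWinnable2 k (permSnoc σ (Fin.last n)) := by
  rintro ⟨i, -, hsm, -, hv⟩
  cases i using Fin.lastCases with
  | last => simp at hsm
  | cast j =>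
    rw [isSecondMax_permSnoc_castSucc] at hsm
    simp only [permSnoc_castSucc, Fin.succAbove_last, Fin.val_castSucc] at hv
    exact not_isSecondMax_of_val_eq σ (by omega) hsm

lemma W2_eq_zero_of_le (θ : ℝ) {N k : ℕ} (h : N ≤ k) : W2 θ N k = 0 := by
  refine sum_eq_zero fun π hπ => absurd (mem_filter.1 hπ).2 ?_
  rintro ⟨i, hki, -⟩
  omega

lemma T2_self (θ : ℝ) (k : ℕ) : T2 θ k k = Pfact θ k := by
  rw [T2, filter_true_of_mem fun π _ i hi => absurd hi (by omega), sum_pow_invCount]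

lemma W2_succ_eq_sum (θ : ℝ) (n k : ℕ) :
    W2 θ (n + 1) k = ∑ e : Fin (n + 1),
      θ ^ (n - e) * ∑ σ ∈ univ.filter (fun σ => kWinnable2 k (permSnoc σ e)), θ ^ invCount σ := by
  rw [W2, sum_filter, sum_perm_succ, sum_comm]
  refine sum_congr rfl fun e _ => ?_
  rw [sum_filter, mul_sum]
  refine sum_congr rfl fun σ _ => ?_
  split_ifs
  · rw [invCount_permSnoc, pow_add, mul_comm]
  · rw [mul_zero]

lemma W2_succ_succ (θ : ℝ) (m k : ℕ) (hk : k ≤ m + 1) :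
    W2 θ (m + 2) k = θ ^ 2 * Ppoly θ m * W2 θ (m + 1) k + θ * T2 θ (m + 1) k := by
  rw [W2_succ_eq_sum, Fin.sum_univ_castSucc, Fin.sum_univ_castSucc]
  have hlow (j : Fin m) :
      univ.filter (fun σ => kWinnable2 k (permSnoc σ j.castSucc.castSucc)) =
        univ.filter (kWinnable2 k) :=
    filter_congr fun σ _ => kWinnable2_permSnoc_of_lt σ _ k (by simp)
  have hmid : univ.filter (fun σ => kWinnable2 k (permSnoc σ (Fin.last m).castSucc)) =
      univ.filter (nonPickable2 k) :=
    filter_congr fun σ _ => kWinnable2_permSnoc_iff_nonPickable2 σ _ hk (by simp)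
  have htop : univ.filter (fun σ => kWinnable2 k (permSnoc σ (Fin.last (m + 1)))) = ∅ :=
    filter_false_of_mem fun σ _ => not_kWinnable2_permSnoc_last σ k
  have hgeom : ∑ j : Fin m, θ ^ (m + 1 - j) = θ ^ 2 * Ppoly θ m := by
    rw [Ppoly_eq_sum_fin, mul_sum]
    refine sum_congr rfl fun j _ => ?_
    rw [← pow_add]
    congr 1
    omega
  simp only [hlow, hmid, htop, ← sum_mul, hgeom, sum_empty, mul_zero, add_zero,
    Fin.val_castSucc, Fin.val_last, Nat.add_sub_cancel_left, pow_one]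
  rw [← W2, ← T2]

end

/-- `W₂(N,k) = θ²·P_{N-2}·W₂(N-1,k) + θ·T₂(N-1,k)` for `N ≥ k+2`, with the initial
condition `W₂(k+1,k) = θ·(P_k)!` (for `k ≥ 1`). -/
theorem W2_recurrence (θ : ℝ) (N k : ℕ) (hk : 1 ≤ k) (hN : k + 2 ≤ N) :
    W2 θ (k + 1) k = θ * Pfact θ k ∧
    W2 θ N k = θ ^ 2 * Ppoly θ (N - 2) * W2 θ (N - 1) k + θ * T2 θ (N - 1) k := by
  obtain ⟨j, rfl⟩ : ∃ j, k = j + 1 := ⟨k - 1, by omega⟩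
  obtain ⟨m, rfl⟩ : ∃ m, N = m + 2 := ⟨N - 2, by omega⟩
  refine ⟨?_, ?_⟩
  · rw [W2_succ_succ θ j (j + 1) le_rfl, W2_eq_zero_of_le θ le_rfl, T2_self]
    ring
  · simpa using W2_succ_succ θ m (j + 1) (by omega)
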